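/- Let σ, τ be polynomials with deg σ ≤ 2, deg τ ≤ 1, and η ∈ ℂ. Assume kσ''/2 + τ' ≠ 0 for all k ∈ ℕ₀ (including k = 0). Then the space of polynomial solutions of σ(z)P'' + τ(z)P' + ηP = 0 has dimension at most 1. -/

import Mathlib

/-!
The operator `L = σ D² + τ D + η` does not raise degrees, and it multiplies the leading
coefficient of a polynomial of degree `n` by `λₙ = n(n-1)σ₂ + nτ₁ + η`. Since
`λₙ - λₘ = (n - m)((n + m - 1)σ''/2 + τ')`, the hypothesis makes `n ↦ λₙ` injective, so all
nonzero solutions of `L P = 0` have the same degree. Eliminating the leading coefficient of two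
solutions therefore leaves a solution of smaller degree, which must vanish.
-/

open Polynomial

namespace Polynomial

variable {R : Type*} [CommRing R]

theorem coeff_mul_iterate_derivative_of_natDegree_le {f S : R[X]} {k n : ℕ}
    (hf : f.natDegree ≤ k) (hS : S.natDegree ≤ n) :
    (f * derivative^[k] S).coeff n = f.coeff k * n.descFactorial k * S.coeff n := by
  rcases lt_or_ge n k with hnk | hkn
  · rw [iterate_derivative_eq_zero (hS.trans_lt hnk), Nat.descFactorial_eq_zero_iff_lt.mpr hnk]
    simp
  · obtain ⟨m, rfl⟩ := Nat.exists_eq_add_of_le hkn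
    have hS' : (derivative^[k] S).natDegree ≤ m :=
      (natDegree_iterate_derivative S k).trans (by omega)
    rw [coeff_mul_add_eq_of_natDegree_le hf hS', coeff_iterate_derivative, add_comm m k,
      nsmul_eq_mul, mul_assoc]

noncomputable def hypergeometricOp (σ τ : R[X]) (η : R) : R[X] →ₗ[R] R[X] where
  toFun P := σ * derivative (derivative P) + τ * derivative P + C η * P
  map_add' P Q := by simp only [derivative_add]; ring
  map_smul' c P := by simp only [smul_eq_C_mul, derivative_C_mul, RingHom.id_apply]; ring

/-- `hypergeometricOp σ τ η` is triangular in the monomial basis, with these diagonal entries. -/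
def hypergeometricEigenvalue (σ τ : R[X]) (η : R) (n : ℕ) : R :=
  n * (n - 1) * σ.coeff 2 + n * τ.coeff 1 + η

variable {σ τ : R[X]} {η : R}

theorem coeff_hypergeometricOp_of_natDegree_le (hσ : σ.natDegree ≤ 2) (hτ : τ.natDegree ≤ 1)
    {S : R[X]} {n : ℕ} (hS : S.natDegree ≤ n) :
    (hypergeometricOp σ τ η S).coeff n = hypergeometricEigenvalue σ τ η n * S.coeff n := by
  have h₂ := coeff_mul_iterate_derivative_of_natDegree_le hσ hS
  have h₁ := coeff_mul_iterate_derivative_of_natDegree_le hτ hS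
  simp only [Function.iterate_succ, Function.iterate_zero, Function.comp_apply, id,
    Nat.cast_descFactorial_two, Nat.descFactorial_one] at h₂ h₁
  simp only [hypergeometricOp, hypergeometricEigenvalue, LinearMap.coe_mk, AddHom.coe_mk,
    coeff_add, coeff_C_mul, h₂, h₁]
  ring

theorem hypergeometricEigenvalue_natDegree_eq_zero [NoZeroDivisors R]
    (hσ : σ.natDegree ≤ 2) (hτ : τ.natDegree ≤ 1)
    {S : R[X]} (hS : S ∈ LinearMap.ker (hypergeometricOp σ τ η)) (hS₀ : S ≠ 0) :
    hypergeometricEigenvalue σ τ η S.natDegree = 0 := by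
  have h := coeff_hypergeometricOp_of_natDegree_le (η := η) hσ hτ (le_refl S.natDegree)
  rw [LinearMap.mem_ker.mp hS, coeff_zero, eq_comm] at h
  exact (mul_eq_zero.mp h).resolve_right (leadingCoeff_ne_zero.mpr hS₀)

theorem hypergeometricEigenvalue_injective [NoZeroDivisors R] [CharZero R]
    (h : ∀ k : ℕ, (k : R) * σ.coeff 2 + τ.coeff 1 ≠ 0) :
    Function.Injective (hypergeometricEigenvalue σ τ η) := by
  intro n m hnm
  by_contra hne
  have hdiff : ((n : R) - m) * (((n + m - 1 : ℕ) : R) * σ.coeff 2 + τ.coeff 1) = 0 := by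
    rw [Nat.cast_sub (by omega)]
    unfold hypergeometricEigenvalue at hnm
    push_cast
    linear_combination hnm
  rcases mul_eq_zero.mp hdiff with h' | h'
  · exact hne (Nat.cast_injective (sub_eq_zero.mp h'))
  · exact h _ h'

theorem natDegree_eq_of_mem_ker_hypergeometricOp [NoZeroDivisors R] [CharZero R]
    (hσ : σ.natDegree ≤ 2) (hτ : τ.natDegree ≤ 1)
    (h : ∀ k : ℕ, (k : R) * σ.coeff 2 + τ.coeff 1 ≠ 0) {P Q : R[X]}
    (hP : P ∈ LinearMap.ker (hypergeometricOp σ τ η))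
    (hQ : Q ∈ LinearMap.ker (hypergeometricOp σ τ η))
    (hP₀ : P ≠ 0) (hQ₀ : Q ≠ 0) : P.natDegree = Q.natDegree :=
  hypergeometricEigenvalue_injective h <|
    (hypergeometricEigenvalue_natDegree_eq_zero hσ hτ hP hP₀).trans
      (hypergeometricEigenvalue_natDegree_eq_zero hσ hτ hQ hQ₀).symm

end Polynomial

theorem Submodule.exists_smul_add_smul_eq_zero_of_natDegree_eq {K : Type*} [Field K]
    {W : Submodule K K[X]}
    (hW : ∀ P ∈ W, ∀ Q ∈ W, P ≠ 0 → Q ≠ 0 → P.natDegree = Q.natDegree)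
    {P Q : K[X]} (hP : P ∈ W) (hQ : Q ∈ W) :
    ∃ c d : K, ¬(c = 0 ∧ d = 0) ∧ c • P + d • Q = 0 := by
  by_cases hP₀ : P = 0
  · exact ⟨1, 0, by simp, by simp [hP₀]⟩
  by_cases hQ₀ : Q = 0
  · exact ⟨0, 1, by simp, by simp [hQ₀]⟩
  have hdeg := hW P hP Q hQ hP₀ hQ₀
  refine ⟨Q.leadingCoeff, -P.leadingCoeff, fun h => leadingCoeff_ne_zero.mpr hQ₀ h.1, ?_⟩
  set R := Q.leadingCoeff • P + (-P.leadingCoeff) • Q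
  have hR : R ∈ W := W.add_mem (W.smul_mem _ hP) (W.smul_mem _ hQ)
  by_contra hR₀
  have hRP := hW R hR P hP hR₀ hP₀
  apply leadingCoeff_ne_zero.mpr hR₀
  rw [leadingCoeff, hRP]
  simp only [R, coeff_add, coeff_smul, smul_eq_mul, leadingCoeff, hdeg]
  ring

/-- If `kσ''/2 + τ' ≠ 0` for all `k ∈ ℕ₀`, then the space of polynomial solutions of
`σP'' + τP' + ηP = 0` is at most one-dimensional: any two polynomial solutions are
linearly dependent. -/
theorem polynomial_solutions_dimension_le_one (σ τ : Polynomial ℂ)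
    (hσ : σ.natDegree ≤ 2) (hτ : τ.natDegree ≤ 1) (η : ℂ)
    (hnd : ∀ k : ℕ, (k : ℂ) * (derivative (derivative σ)).coeff 0 / 2
      + (derivative τ).coeff 0 ≠ 0)
    (P Q : Polynomial ℂ)
    (hP : σ * derivative (derivative P) + τ * derivative P + Polynomial.C η * P = 0)
    (hQ : σ * derivative (derivative Q) + τ * derivative Q + Polynomial.C η * Q = 0) :
    ∃ c d : ℂ, ¬(c = 0 ∧ d = 0) ∧ c • P + d • Q = 0 := by
  have hσ'' : (derivative (derivative σ)).coeff 0 = σ.coeff 2 * 2 := by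
    norm_num [coeff_derivative]
  have hτ' : (derivative τ).coeff 0 = τ.coeff 1 := by
    norm_num [coeff_derivative]
  have hnd' (k : ℕ) : (k : ℂ) * σ.coeff 2 + τ.coeff 1 ≠ 0 := by
    simpa only [hσ'', hτ', ← mul_assoc, mul_div_cancel_right₀ _ (two_ne_zero' ℂ)] using hnd k
  exact Submodule.exists_smul_add_smul_eq_zero_of_natDegree_eq
    (fun _ hP _ hQ => natDegree_eq_of_mem_ker_hypergeometricOp (η := η) hσ hτ hnd' hP hQ)
    (LinearMap.mem_ker.mpr hP) (LinearMap.mem_ker.mpr hQ)
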